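/- arXiv:2203.01021 — 4 statements merged into one kernel-verified Lean document; each statement's English description precedes it below -/
import Mathlib

section
/- Let f : ℝ^d → ℝ be any function and g : [0,∞) → [0,∞) a monotonically decreasing function such that |f(x)| ≤ g(|x|) for all x ∈ ℝ^d and ∫₀^∞ g(r) r^{d-1} dr < ∞. Then the sum over z ∈ ℤ^d of |f(z)| is finite, and in fact ∑_{z∈ℤ^d} |f(z)| ≤ g(0) + ∑_{n=1}^{d} C(d,n) (2π^{n/2}/Γ(n/2)) ∫₀^∞ g(r) r^{n-1} dr. -/
/-!
Split `ℤ^d` according to the support `S` of a lattice point. The points with support `S` are the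
vectors of `(ℤ ∖ {0})^S`, and such a vector `w` is the outer corner of a half-open unit cube whose
points `x` satisfy `|xᵢ| ≤ |wᵢ|`, so `g ‖w‖ ≤ g ‖x‖` there. These cubes are disjoint, hence the sum
over support `S` is at most `∫_{ℝ^S} g ‖x‖ dx`, which polar coordinates turn into
`(2π^{n/2}/Γ(n/2)) ∫₀^∞ g(r) r^{n-1} dr` with `n = #S`; the empty support contributes `g 0`.
Counting supports by size gives the binomial coefficients.
-/

open MeasureTheory Filter Topology Set

noncomputable section

/-- Embedding of the lattice ℤ^d into Euclidean space ℝ^d. -/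
def latt (d : ℕ) (z : Fin d → ℤ) : EuclideanSpace ℝ (Fin d) := WithLp.toLp 2 (fun i => (z i : ℝ))

open Function Real
open scoped ENNReal

/-- `Ioc (cellBase m) (cellBase m + 1)` is the unit interval with endpoint `m` on the side of `0`;
on `m ≠ 0`, `cellBase` is a bijection onto `ℤ`, so these intervals are pairwise disjoint. -/
def cellBase (m : ℤ) : ℤ := if 0 < m then m - 1 else m

lemma cellBase_injective : Injective fun m : {m : ℤ // m ≠ 0} => cellBase m := by
  rintro ⟨m, hm⟩ ⟨m', hm'⟩ h
  simp only [cellBase] at h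
  rw [Subtype.mk.injEq]
  split_ifs at h <;> omega

lemma abs_le_of_mem_Ioc_cellBase {m : ℤ} (hm : m ≠ 0) {x : ℝ}
    (hx : x ∈ Ioc (cellBase m : ℝ) (cellBase m + 1)) : |x| ≤ |(m : ℝ)| := by
  obtain ⟨hlo, hhi⟩ := hx
  unfold cellBase at hlo hhi
  split_ifs at hlo hhi with h
  · have : (1 : ℝ) ≤ m := by exact_mod_cast h
    push_cast at hlo hhi
    rw [abs_of_pos (by linarith), abs_of_pos (by linarith)]
    linarith
  · have : (m : ℝ) + 1 ≤ 0 := by exact_mod_cast (show m + 1 ≤ 0 by omega)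
    rw [abs_of_nonpos (by linarith), abs_of_neg (by linarith)]
    linarith

lemma EuclideanSpace.norm_le_norm_of_abs_le {ι : Type*} [Fintype ι] {x y : EuclideanSpace ℝ ι}
    (h : ∀ i, |x i| ≤ |y i|) : ‖x‖ ≤ ‖y‖ := by
  rw [EuclideanSpace.norm_eq, EuclideanSpace.norm_eq]
  gcongr with i
  simpa only [Real.norm_eq_abs] using h i

lemma tsum_nonzero_lattice_le_lintegral {ι : Type*} [Fintype ι] {G : ℝ → ℝ≥0∞}
    (hG : AntitoneOn G (Ici 0)) :
    ∑' w : ι → {m : ℤ // m ≠ 0}, G ‖WithLp.toLp 2 fun i => ((w i : ℤ) : ℝ)‖ ≤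
      ∫⁻ x : EuclideanSpace ℝ ι, G ‖x‖ := by
  set cell : (ι → {m : ℤ // m ≠ 0}) → Set (EuclideanSpace ℝ ι) := fun w =>
    WithLp.ofLp ⁻¹' univ.pi fun i => Ioc (cellBase (w i) : ℝ) (cellBase (w i) + 1)
  have cell_meas (w) : MeasurableSet (cell w) :=
    (MeasurableSet.univ_pi fun _ => measurableSet_Ioc).preimage (by fun_prop)
  have cell_vol (w) : volume (cell w) = 1 := by
    rw [(PiLp.volume_preserving_ofLp ι).measure_preimage
      (MeasurableSet.univ_pi fun _ => measurableSet_Ioc).nullMeasurableSet, volume_pi_pi]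
    simp
  have cell_disj : Pairwise (Disjoint on cell) := by
    intro w w' hww'
    obtain ⟨i, hi⟩ := Function.ne_iff.mp hww'
    refine Disjoint.preimage _ (disjoint_univ_pi.mpr ⟨i, ?_⟩)
    exact pairwise_disjoint_Ioc_intCast ℝ (cellBase_injective.ne hi)
  have le_on_cell (w) : ∀ x ∈ cell w, G ‖WithLp.toLp 2 fun i => ((w i : ℤ) : ℝ)‖ ≤ G ‖x‖ :=
    fun x hx => hG (norm_nonneg _) (norm_nonneg _) <|
      EuclideanSpace.norm_le_norm_of_abs_le fun i =>
        abs_le_of_mem_Ioc_cellBase (w i).2 (hx i trivial)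
  calc ∑' w, G ‖WithLp.toLp 2 fun i => ((w i : ℤ) : ℝ)‖
      ≤ ∑' w, ∫⁻ x in cell w, G ‖x‖ := ENNReal.tsum_le_tsum fun w => by
        simpa [cell_vol] using setLIntegral_mono' (μ := volume) (cell_meas w) (le_on_cell w)
    _ = ∫⁻ x in ⋃ w, cell w, G ‖x‖ := (lintegral_iUnion cell_meas cell_disj _).symm
    _ ≤ ∫⁻ x, G ‖x‖ := setLIntegral_le_lintegral _ _

lemma EuclideanSpace.norm_eq_norm_restrict {ι : Type*} [Fintype ι] {x : EuclideanSpace ℝ ι}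
    {S : Finset ι} (hx : ∀ i ∉ S, x i = 0) :
    ‖x‖ = ‖(WithLp.toLp 2 fun i : S => x i : EuclideanSpace ℝ S)‖ := by
  rw [EuclideanSpace.norm_eq, EuclideanSpace.norm_eq, Finset.sum_coe_sort S fun i => ‖x i‖ ^ 2,
    Finset.sum_subset (Finset.subset_univ S) fun i _ hi => by simp [hx i hi]]

lemma tsum_lattice_le_sum_tsum_nonzero {ι : Type*} [Fintype ι] (G : ℝ → ℝ≥0∞) :
    ∑' z : ι → ℤ, G ‖WithLp.toLp 2 fun i => (z i : ℝ)‖ ≤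
      ∑ S : Finset ι, ∑' w : S → {m : ℤ // m ≠ 0}, G ‖WithLp.toLp 2 fun i => ((w i : ℤ) : ℝ)‖ := by
  classical
  let support (z : ι → ℤ) : Finset ι := {i | z i ≠ 0}
  rw [← ENNReal.tsum_fiberwise _ support, tsum_fintype]
  gcongr with S
  have mem_fiber {z : ι → ℤ} (hz : z ∈ support ⁻¹' {S}) (i : ι) : z i ≠ 0 ↔ i ∈ S := by
    rw [← (hz : support z = S)]
    simp [support]
  let restrict (z : support ⁻¹' {S}) (i : S) : {m : ℤ // m ≠ 0} := ⟨z.1 i, (mem_fiber z.2 i).2 i.2⟩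
  have vanish (z : support ⁻¹' {S}) (i) (hi : i ∉ S) : z.1 i = 0 :=
    not_not.1 fun h => hi ((mem_fiber z.2 i).1 h)
  have restrict_injective : Injective restrict := by
    intro z z' h
    ext i
    by_cases hi : i ∈ S
    · exact congrArg Subtype.val (congrFun h ⟨i, hi⟩)
    · rw [vanish z i hi, vanish z' i hi]
  calc ∑' z : support ⁻¹' {S}, G ‖WithLp.toLp 2 fun i => (z.1 i : ℝ)‖
      = ∑' z : support ⁻¹' {S}, G ‖WithLp.toLp 2 fun i => ((restrict z i : ℤ) : ℝ)‖ := by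
        refine tsum_congr fun z => ?_
        rw [EuclideanSpace.norm_eq_norm_restrict (S := S) fun i hi => by simp [vanish z i hi]]
    _ ≤ _ := ENNReal.tsum_comp_le_tsum_of_injective restrict_injective _

/-- `∫_{ℝⁿ} g ‖x‖ dx` in polar coordinates (`2π^{n/2}/Γ(n/2)` is the area of the unit sphere);
for `n = 0` it is the integral over the one-point space `ℝ⁰`. -/
def radialIntegral (g : ℝ → ℝ) (n : ℕ) : ℝ :=
  if n = 0 then g 0
  else 2 * π ^ ((n : ℝ) / 2) / Gamma ((n : ℝ) / 2) * ∫ r in Ioi 0, g r * r ^ (n - 1)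

lemma radialIntegral_nonneg {g : ℝ → ℝ} (hg : ∀ r ∈ Ici (0 : ℝ), 0 ≤ g r) (n : ℕ) :
    0 ≤ radialIntegral g n := by
  unfold radialIntegral
  split_ifs with hn
  · exact hg 0 self_mem_Ici
  · have : 0 < Gamma ((n : ℝ) / 2) := Gamma_pos_of_pos (by positivity)
    exact mul_nonneg (by positivity) <| setIntegral_nonneg measurableSet_Ioi fun r hr =>
      mul_nonneg (hg r (mem_Ici_of_Ioi hr)) (pow_nonneg (le_of_lt hr) _)

lemma EuclideanSpace.card_mul_volume_real_ball (ι : Type*) [Fintype ι] [Nonempty ι] :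
    Fintype.card ι * volume.real (Metric.ball (0 : EuclideanSpace ℝ ι) 1) =
      2 * π ^ ((Fintype.card ι : ℝ) / 2) / Gamma ((Fintype.card ι : ℝ) / 2) := by
  have hn : (0 : ℝ) < Fintype.card ι := by exact_mod_cast Fintype.card_pos
  have hΓ : 0 < Gamma ((Fintype.card ι : ℝ) / 2) := Gamma_pos_of_pos (by positivity)
  have hsqrt : √π ^ Fintype.card ι = π ^ ((Fintype.card ι : ℝ) / 2) := by
    rw [sqrt_eq_rpow, ← rpow_natCast, ← rpow_mul pi_pos.le]
    ring_nf
  rw [measureReal_def, EuclideanSpace.volume_ball, ENNReal.ofReal_one, one_pow, one_mul,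
    ENNReal.toReal_ofReal (by positivity), hsqrt, Gamma_add_one (by positivity)]
  field_simp

lemma lintegral_ofReal_norm_eq_radialIntegral {ι : Type*} [Fintype ι] [Nonempty ι] {g : ℝ → ℝ}
    (hg : ∀ r ∈ Ici (0 : ℝ), 0 ≤ g r)
    (hint : IntegrableOn (fun r => g r * r ^ (Fintype.card ι - 1)) (Ioi 0)) :
    ∫⁻ x : EuclideanSpace ℝ ι, ENNReal.ofReal (g ‖x‖) =
      ENNReal.ofReal (radialIntegral g (Fintype.card ι)) := by
  have hint' : Integrable fun x : EuclideanSpace ℝ ι => g ‖x‖ := by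
    rw [integrable_fun_norm_addHaar, finrank_euclideanSpace]
    simpa only [smul_eq_mul, mul_comm] using hint
  rw [← ofReal_integral_eq_lintegral_ofReal hint' (ae_of_all _ fun x => hg _ (norm_nonneg x)),
    integral_fun_norm_addHaar, finrank_euclideanSpace, radialIntegral, if_neg Fintype.card_ne_zero,
    ← EuclideanSpace.card_mul_volume_real_ball]
  simp only [nsmul_eq_mul, smul_eq_mul, mul_assoc, mul_comm (g _)]

lemma integrableOn_Ioi_mul_pow_of_le {g : ℝ → ℝ} (hg_anti : AntitoneOn g (Ici 0))
    (hg_nonneg : ∀ r ∈ Ici (0 : ℝ), 0 ≤ g r) {k m : ℕ} (hkm : k ≤ m)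
    (hint : IntegrableOn (fun r => g r * r ^ m) (Ioi 0)) :
    IntegrableOn (fun r => g r * r ^ k) (Ioi 0) := by
  have hmeas : AEStronglyMeasurable (fun r => g r * r ^ k) (volume.restrict (Ioi 0)) :=
    ((aemeasurable_restrict_of_antitoneOn measurableSet_Ioi
      (hg_anti.mono Ioi_subset_Ici_self)).mul (by fun_prop)).aestronglyMeasurable
  rw [← Ioc_union_Ioi_eq_Ioi zero_le_one]
  refine IntegrableOn.union ?_ ?_
  · refine (integrableOn_const (C := g 0) measure_Ioc_lt_top.ne).mono'
      (hmeas.mono_set Ioc_subset_Ioi_self) ?_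
    filter_upwards [ae_restrict_mem measurableSet_Ioc] with r ⟨hr0, hr1⟩
    rw [norm_mul, norm_pow, Real.norm_of_nonneg (hg_nonneg r hr0.le), Real.norm_of_nonneg hr0.le]
    exact (mul_le_of_le_one_right (hg_nonneg r hr0.le) (pow_le_one₀ hr0.le hr1)).trans
      (hg_anti self_mem_Ici hr0.le hr0.le)
  · refine (hint.mono_set (Ioi_subset_Ioi zero_le_one)).mono'
      (hmeas.mono_set (Ioi_subset_Ioi zero_le_one)) ?_
    filter_upwards [ae_restrict_mem measurableSet_Ioi] with r (hr : 1 < r)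
    have hr0 : (0 : ℝ) ≤ r := by linarith
    rw [norm_mul, norm_pow, Real.norm_of_nonneg (hg_nonneg r hr0), Real.norm_of_nonneg hr0]
    exact mul_le_mul_of_nonneg_left (pow_le_pow_right₀ hr.le hkm) (hg_nonneg r hr0)

lemma tsum_nonzero_lattice_le_radialIntegral {ι : Type*} [Fintype ι] {g : ℝ → ℝ}
    (hg_anti : AntitoneOn g (Ici 0)) (hg_nonneg : ∀ r ∈ Ici (0 : ℝ), 0 ≤ g r)
    (hint : IntegrableOn (fun r => g r * r ^ (Fintype.card ι - 1)) (Ioi 0)) :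
    ∑' w : ι → {m : ℤ // m ≠ 0}, ENNReal.ofReal (g ‖WithLp.toLp 2 fun i => ((w i : ℤ) : ℝ)‖) ≤
      ENNReal.ofReal (radialIntegral g (Fintype.card ι)) := by
  cases isEmpty_or_nonempty ι
  · simp [radialIntegral, Subsingleton.elim _ (0 : EuclideanSpace ℝ ι)]
  · exact (tsum_nonzero_lattice_le_lintegral
      (ENNReal.ofReal_mono.comp_antitoneOn hg_anti)).trans_eq
        (lintegral_ofReal_norm_eq_radialIntegral hg_nonneg hint)

lemma tsum_lattice_ofReal_le {ι : Type*} [Fintype ι] {g : ℝ → ℝ}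
    (hg_anti : AntitoneOn g (Ici 0)) (hg_nonneg : ∀ r ∈ Ici (0 : ℝ), 0 ≤ g r)
    (hint : IntegrableOn (fun r => g r * r ^ (Fintype.card ι - 1)) (Ioi 0)) :
    ∑' z : ι → ℤ, ENNReal.ofReal (g ‖WithLp.toLp 2 fun i => (z i : ℝ)‖) ≤
      ENNReal.ofReal (∑ S : Finset ι, radialIntegral g S.card) := by
  calc ∑' z : ι → ℤ, ENNReal.ofReal (g ‖WithLp.toLp 2 fun i => (z i : ℝ)‖)
      ≤ ∑ S : Finset ι, ∑' w : S → {m : ℤ // m ≠ 0},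
          ENNReal.ofReal (g ‖WithLp.toLp 2 fun i => ((w i : ℤ) : ℝ)‖) :=
        tsum_lattice_le_sum_tsum_nonzero fun r => ENNReal.ofReal (g r)
    _ ≤ ∑ S : Finset ι, ENNReal.ofReal (radialIntegral g S.card) := by
        gcongr with S
        have hS : Fintype.card S - 1 ≤ Fintype.card ι - 1 := by
          rw [Fintype.card_coe]
          exact Nat.sub_le_sub_right (Finset.card_le_univ S) 1
        simpa only [Fintype.card_coe] using tsum_nonzero_lattice_le_radialIntegral hg_anti hg_nonneg
          (integrableOn_Ioi_mul_pow_of_le hg_anti hg_nonneg hS hint)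
    _ = ENNReal.ofReal (∑ S : Finset ι, radialIntegral g S.card) :=
        (ENNReal.ofReal_sum_of_nonneg fun S _ => radialIntegral_nonneg hg_nonneg _).symm

lemma sum_radialIntegral_card (g : ℝ → ℝ) (ι : Type*) [Fintype ι] :
    ∑ S : Finset ι, radialIntegral g S.card =
      g 0 + ∑ n ∈ Finset.Icc 1 (Fintype.card ι), ((Fintype.card ι).choose n : ℝ) *
        (2 * π ^ ((n : ℝ) / 2) / Gamma ((n : ℝ) / 2)) * ∫ r in Ioi 0, g r * r ^ (n - 1) := by
  rw [← Finset.powerset_univ, Finset.sum_powerset_apply_card, Finset.card_univ,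
    Nat.range_succ_eq_Icc_zero, ← Finset.insert_Icc_succ_left_eq_Icc (Nat.zero_le _),
    Finset.sum_insert (by simp)]
  congr 1
  · simp [radialIntegral]
  · refine Finset.sum_congr rfl fun n hn => ?_
    rw [radialIntegral, if_neg (Nat.one_le_iff_ne_zero.1 (Finset.mem_Icc.1 hn).1), nsmul_eq_mul,
      mul_assoc]

lemma summable_and_tsum_le_of_tsum_ofReal_le {α : Type*} {a : α → ℝ} {B : ℝ}
    (ha : ∀ x, 0 ≤ a x) (hB : 0 ≤ B) (h : ∑' x, ENNReal.ofReal (a x) ≤ ENNReal.ofReal B) :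
    Summable a ∧ ∑' x, a x ≤ B := by
  have hsum : Summable a := by
    simpa only [ENNReal.toReal_ofReal (ha _)] using
      ENNReal.summable_toReal (ne_top_of_le_ne_top ENNReal.ofReal_ne_top h)
  refine ⟨hsum, (ENNReal.ofReal_le_ofReal_iff hB).1 ?_⟩
  rwa [ENNReal.ofReal_tsum_of_nonneg ha hsum]

theorem integral_test_series_estimate_general
    (d : ℕ)
    (f : EuclideanSpace ℝ (Fin d) → ℝ) (g : ℝ → ℝ)
    (hg_anti : AntitoneOn g (Set.Ici 0))
    (hg_nonneg : ∀ r ∈ Set.Ici (0 : ℝ), 0 ≤ g r)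
    (hfg : ∀ x, |f x| ≤ g ‖x‖)
    (hint : IntegrableOn (fun r => g r * r ^ (d - 1)) (Set.Ioi (0 : ℝ))) :
    Summable (fun z : Fin d → ℤ => |f (latt d z)|) ∧
      ∑' z : Fin d → ℤ, |f (latt d z)| ≤
        g 0 + ∑ n ∈ Finset.Icc 1 d,
          (d.choose n : ℝ) * (2 * Real.pi ^ ((n : ℝ) / 2) / Real.Gamma ((n : ℝ) / 2)) *
            ∫ r in Set.Ioi (0 : ℝ), g r * r ^ (n - 1) := by
  have hbound : ∑' z, ENNReal.ofReal |f (latt d z)| ≤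
      ENNReal.ofReal (∑ S : Finset (Fin d), radialIntegral g S.card) :=
    (ENNReal.tsum_le_tsum fun z => ENNReal.ofReal_le_ofReal (hfg _)).trans
      (tsum_lattice_ofReal_le hg_anti hg_nonneg (by simpa using hint))
  obtain ⟨hsum, hle⟩ := summable_and_tsum_le_of_tsum_ofReal_le (fun z => abs_nonneg _)
    (Finset.sum_nonneg fun S _ => radialIntegral_nonneg hg_nonneg _) hbound
  exact ⟨hsum, hle.trans_eq (by simpa using sum_radialIntegral_card g (Fin d))⟩

/-- **Integral test for series estimates — I.**
If `|f x| ≤ g ‖x‖` with `g : [0,∞) → [0,∞)` monotonically decreasing and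
`∫₀^∞ g(r) r^{d-1} dr < ∞`, then `∑_{z ∈ ℤ^d} |f z|` is finite and bounded by
`g 0 + ∑_{n=1}^d C(d,n) (2 π^{n/2} / Γ(n/2)) ∫₀^∞ g(r) r^{n-1} dr`. -/
theorem integral_test_series_estimate
    (d : ℕ) (hd : 0 < d)
    (f : EuclideanSpace ℝ (Fin d) → ℝ) (g : ℝ → ℝ)
    (hg_anti : AntitoneOn g (Set.Ici 0))
    (hg_nonneg : ∀ r ∈ Set.Ici (0 : ℝ), 0 ≤ g r)
    (hfg : ∀ x, |f x| ≤ g ‖x‖)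
    (hint : IntegrableOn (fun r => g r * r ^ (d - 1)) (Set.Ioi (0 : ℝ))) :
    Summable (fun z : Fin d → ℤ => |f (latt d z)|) ∧
      ∑' z : Fin d → ℤ, |f (latt d z)| ≤
        g 0 + ∑ n ∈ Finset.Icc 1 d,
          (d.choose n : ℝ) * (2 * Real.pi ^ ((n : ℝ) / 2) / Real.Gamma ((n : ℝ) / 2)) *
            ∫ r in Set.Ioi (0 : ℝ), g r * r ^ (n - 1) :=
  integral_test_series_estimate_general d f g hg_anti hg_nonneg hfg hint

end
end

section
/- Let f : ℝ^d → ℝ and g : [0,∞) → [0,∞) be a monotonically decreasing function with |f(x)| ≤ g(|x|) for all x and ∫₀^∞ g(r) r^{d-1} dr < ∞. Then for every γ > 0 and every a ∈ ℤ^d, the series ∑_{z∈ℤ^d} γ^d f(γz + a) is absolutely convergent. Moreover, if γ < 1, there exists a constant M_g depending only on g (and d) such that ∑_{z∈ℤ^d} |γ^d f(γz + a)| ≤ M_g, and M_g can be chosen additive and positively homogeneous in g. -/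
open MeasureTheory Filter Topology Set

noncomputable section

/-- Admissibility of the dominating function `g`: nonnegative and monotonically
decreasing on `[0,∞)`, with `∫₀^∞ g(r) r^{d-1} dr < ∞`. -/
def AdmissibleDom (d : ℕ) (g : ℝ → ℝ) : Prop :=
  AntitoneOn g (Set.Ici 0) ∧ (∀ r ∈ Set.Ici (0 : ℝ), 0 ≤ g r) ∧
    IntegrableOn (fun r => g r * r ^ (d - 1)) (Set.Ioi (0 : ℝ))

/-!
The point `c = γ • z + a` of the scaled lattice owns the half-open cube `c + [0, γ)^d`, of volume
`γ^d`. These cubes are pairwise disjoint and every point `x` of the cube of `c` satisfies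
`‖x‖ - √d γ ≤ ‖c‖`, so by monotonicity `γ^d g ‖c‖ ≤ ∫_{cube} g (max (‖x‖ - √d γ) 0)`. Summing,
every partial sum of `∑ |γ^d f (γ z + a)|` is bounded by `∫_{ℝ^d} g (max (‖x‖ - √d γ) 0)`, which
is finite by integration in polar coordinates (the shift by `√d γ` only costs a factor `2^(d-1)`
at large radii). This integral grows with `γ`, so for `γ < 1` it is at most
`M g := ∫_{ℝ^d} g (max (‖x‖ - √d) 0)`, which is linear in `g`.
-/

lemma AntitoneOn.antitone_comp_max_zero {g : ℝ → ℝ} (hg : AntitoneOn g (Ici 0)) :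
    Antitone fun r : ℝ => g (max r 0) := fun _ _ hrs =>
  hg (mem_Ici.2 (le_max_right _ 0)) (mem_Ici.2 (le_max_right _ 0)) (max_le_max hrs le_rfl)

lemma integrableOn_Ioi_comp_max_sub_mul_pow {g : ℝ → ℝ} {n : ℕ} (hanti : AntitoneOn g (Ici 0))
    (hnn : ∀ r ∈ Ici (0 : ℝ), 0 ≤ g r) (hint : IntegrableOn (fun r => g r * r ^ n) (Ioi 0))
    {R : ℝ} (hR : 0 ≤ R) :
    IntegrableOn (fun r => g (max (r - R) 0) * r ^ n) (Ioi 0) := by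
  have hmeas : Measurable fun r : ℝ => g (max (r - R) 0) * r ^ n :=
    (hanti.antitone_comp_max_zero.measurable.comp (measurable_id.sub_const R)).mul
      (measurable_id.pow_const n)
  rw [← Ioc_union_Ioi_eq_Ioi (by linarith : (0 : ℝ) ≤ 2 * R)]
  refine .union ?_ ?_
  · refine Measure.integrableOn_of_bounded (M := g 0 * (2 * R) ^ n) measure_Ioc_lt_top.ne
      hmeas.aestronglyMeasurable ?_
    filter_upwards [ae_restrict_mem measurableSet_Ioc] with r ⟨hr0, hrR⟩
    have hg0 : 0 ≤ g (max (r - R) 0) := hnn _ (mem_Ici.2 (le_max_right _ _))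
    rw [Real.norm_of_nonneg (mul_nonneg hg0 (by positivity))]
    exact mul_le_mul (hanti self_mem_Ici (mem_Ici.2 (le_max_right _ _)) (le_max_right _ _))
      (pow_le_pow_left₀ hr0.le hrR n) (by positivity) (hnn 0 self_mem_Ici)
  · have hshift : IntegrableOn (fun r => g (r - R) * (r - R) ^ n) (Ioi R) := by
      simpa [Function.comp_def] using
        ((measurePreserving_sub_right volume R).integrableOn_comp_preimage
          (measurableEmbedding_subRight R)).2 hint
    refine ((hshift.mono_set (Ioi_subset_Ioi (by linarith))).const_mul (2 ^ n)).mono'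
      hmeas.aestronglyMeasurable.restrict ?_
    filter_upwards [ae_restrict_mem measurableSet_Ioi] with r (hr : 2 * R < r)
    have hrR : 0 ≤ r - R := by linarith
    rw [max_eq_left hrR,
      Real.norm_of_nonneg (mul_nonneg (hnn _ hrR) (pow_nonneg (by linarith) n))]
    calc g (r - R) * r ^ n ≤ g (r - R) * (2 * (r - R)) ^ n := by
          gcongr
          exacts [hnn _ hrR, by linarith, by linarith]
      _ = 2 ^ n * (g (r - R) * (r - R) ^ n) := by rw [mul_pow]; ring

section Radial

variable {E : Type*} [NormedAddCommGroup E] [NormedSpace ℝ E] [FiniteDimensional ℝ E]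
  [MeasurableSpace E] [BorelSpace E] [Nontrivial E] (μ : Measure E) [μ.IsAddHaarMeasure]
  {g : ℝ → ℝ}

lemma integrable_comp_max_norm_sub (hg : AdmissibleDom (Module.finrank ℝ E) g) {R : ℝ}
    (hR : 0 ≤ R) : Integrable (fun x : E => g (max (‖x‖ - R) 0)) μ := by
  obtain ⟨hanti, hnn, hint⟩ := hg
  rw [integrable_fun_norm_addHaar μ (f := fun r => g (max (r - R) 0))]
  simpa only [smul_eq_mul, mul_comm] using
    integrableOn_Ioi_comp_max_sub_mul_pow hanti hnn hint hR

lemma integral_comp_max_norm_sub_mono (hg : AdmissibleDom (Module.finrank ℝ E) g) {R R' : ℝ}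
    (hR : 0 ≤ R) (hRR' : R ≤ R') :
    ∫ x, g (max (‖x‖ - R) 0) ∂μ ≤ ∫ x, g (max (‖x‖ - R') 0) ∂μ :=
  integral_mono (integrable_comp_max_norm_sub μ hg hR)
    (integrable_comp_max_norm_sub μ hg (hR.trans hRR'))
    fun _ => hg.1.antitone_comp_max_zero (by linarith)

end Radial

section Cube

variable {ι : Type*}

def cube (c : EuclideanSpace ℝ ι) (γ : ℝ) : Set (EuclideanSpace ℝ ι) :=
  {x | ∀ i, x i ∈ Ico (c i) (c i + γ)}

lemma cube_eq_preimage (c : EuclideanSpace ℝ ι) (γ : ℝ) :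
    cube c γ =
      (MeasurableEquiv.toLp 2 (ι → ℝ)).symm ⁻¹' univ.pi fun i => Ico (c i) (c i + γ) := by
  ext x
  simp [cube]

variable [Fintype ι]

lemma measurableSet_cube (c : EuclideanSpace ℝ ι) (γ : ℝ) : MeasurableSet (cube c γ) := by
  rw [cube_eq_preimage]
  exact (MeasurableEquiv.toLp 2 (ι → ℝ)).symm.measurable
    (MeasurableSet.univ_pi fun _ => measurableSet_Ico)

lemma volume_cube (c : EuclideanSpace ℝ ι) (γ : ℝ) :
    volume (cube c γ) = ENNReal.ofReal γ ^ Fintype.card ι := by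
  rw [cube_eq_preimage,
    (EuclideanSpace.volume_preserving_symm_measurableEquiv_toLp ι).measure_preimage
      (MeasurableSet.univ_pi fun _ => measurableSet_Ico).nullMeasurableSet, volume_pi_pi]
  simp [Real.volume_Ico]

lemma norm_sub_le_of_mem_cube {c x : EuclideanSpace ℝ ι} {γ : ℝ} (hγ : 0 ≤ γ)
    (hx : x ∈ cube c γ) : ‖x - c‖ ≤ √(Fintype.card ι) * γ := by
  have hcoord : ∀ i, ‖(x - c) i‖ ≤ γ := fun i => by
    obtain ⟨h₁, h₂⟩ := hx i
    rw [PiLp.sub_apply, Real.norm_eq_abs, abs_le]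
    constructor <;> linarith
  calc ‖x - c‖ = √(∑ i, ‖(x - c) i‖ ^ 2) := EuclideanSpace.norm_eq _
    _ ≤ √(∑ _ : ι, γ ^ 2) := by gcongr with i; exact hcoord i
    _ = √(Fintype.card ι) * γ := by
      rw [Finset.sum_const, Finset.card_univ, nsmul_eq_mul, Real.sqrt_mul (Nat.cast_nonneg _),
        Real.sqrt_sq hγ]

lemma pow_mul_le_setIntegral_cube {g : ℝ → ℝ} (hanti : AntitoneOn g (Ici 0)) {γ : ℝ}
    (hγ : 0 ≤ γ)
    (hint : Integrable fun x : EuclideanSpace ℝ ι => g (max (‖x‖ - √(Fintype.card ι) * γ) 0))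
    (c : EuclideanSpace ℝ ι) :
    γ ^ Fintype.card ι * g ‖c‖ ≤ ∫ x in cube c γ, g (max (‖x‖ - √(Fintype.card ι) * γ) 0) := by
  have hle : ∀ x ∈ cube c γ, g ‖c‖ ≤ g (max (‖x‖ - √(Fintype.card ι) * γ) 0) := fun x hx => by
    have := norm_sub_norm_le x c
    have := norm_sub_le_of_mem_cube hγ hx
    exact hanti (mem_Ici.2 (le_max_right _ _)) (mem_Ici.2 (norm_nonneg _))
      (max_le (by linarith) (norm_nonneg _))
  calc γ ^ Fintype.card ι * g ‖c‖ = ∫ _ in cube c γ, g ‖c‖ := by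
        rw [setIntegral_const, measureReal_def, volume_cube, ENNReal.toReal_pow,
          ENNReal.toReal_ofReal hγ, smul_eq_mul]
    _ ≤ _ := setIntegral_mono_on (integrableOn_const (by simp [volume_cube]))
      hint.integrableOn (measurableSet_cube c γ) hle

end Cube

section Lattice

variable {d : ℕ} {γ : ℝ}

lemma floor_eq_of_mem_cube_lattice (hγ : 0 < γ) {b x : EuclideanSpace ℝ (Fin d)}
    {z : Fin d → ℤ} (hx : x ∈ cube (γ • latt d z + b) γ) (i : Fin d) :
    ⌊(x i - b i) / γ⌋ = z i := by
  obtain ⟨h₁, h₂⟩ := hx i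
  simp only [latt, PiLp.add_apply, PiLp.smul_apply, smul_eq_mul] at h₁ h₂
  rw [Int.floor_eq_iff, le_div_iff₀ hγ, div_lt_iff₀ hγ]
  constructor <;> linarith

open Function in
lemma pairwise_disjoint_cube_lattice (hγ : 0 < γ) (b : EuclideanSpace ℝ (Fin d)) :
    Pairwise (Disjoint on fun z => cube (γ • latt d z + b) γ) := by
  intro z z' hzz'
  refine Set.disjoint_left.2 fun x hx hx' => hzz' (funext fun i => ?_)
  rw [← floor_eq_of_mem_cube_lattice hγ hx i, floor_eq_of_mem_cube_lattice hγ hx' i]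

lemma sum_abs_lattice_le_integral {f : EuclideanSpace ℝ (Fin d) → ℝ} {g : ℝ → ℝ}
    (hanti : AntitoneOn g (Ici 0)) (hnn : ∀ r ∈ Ici (0 : ℝ), 0 ≤ g r) (hf : ∀ x, |f x| ≤ g ‖x‖)
    (hγ : 0 < γ) (b : EuclideanSpace ℝ (Fin d))
    (hint : Integrable fun x : EuclideanSpace ℝ (Fin d) => g (max (‖x‖ - √d * γ) 0))
    (s : Finset (Fin d → ℤ)) :
    ∑ z ∈ s, |γ ^ d * f (γ • latt d z + b)| ≤
      ∫ x : EuclideanSpace ℝ (Fin d), g (max (‖x‖ - √d * γ) 0) := by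
  set Q := fun z : Fin d → ℤ => cube (γ • latt d z + b) γ
  have hcube : ∀ z, |γ ^ d * f (γ • latt d z + b)| ≤ ∫ x in Q z, g (max (‖x‖ - √d * γ) 0) :=
    fun z => by
      rw [abs_mul, abs_of_pos (pow_pos hγ d)]
      calc γ ^ d * |f (γ • latt d z + b)| ≤ γ ^ d * g ‖γ • latt d z + b‖ := by gcongr; exact hf _
        _ ≤ _ := by
          simpa using pow_mul_le_setIntegral_cube (ι := Fin d) hanti hγ.le (by simpa using hint) _
  calc ∑ z ∈ s, |γ ^ d * f (γ • latt d z + b)|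
      ≤ ∑ z ∈ s, ∫ x in Q z, g (max (‖x‖ - √d * γ) 0) := Finset.sum_le_sum fun z _ => hcube z
    _ = ∫ x in ⋃ z ∈ s, Q z, g (max (‖x‖ - √d * γ) 0) :=
        (integral_biUnion_finset s (fun z _ => measurableSet_cube _ _)
          ((pairwise_disjoint_cube_lattice hγ b).set_pairwise _) fun _ _ => hint.integrableOn).symm
    _ ≤ ∫ x, g (max (‖x‖ - √d * γ) 0) :=
        setIntegral_le_integral hint (.of_forall fun _ => hnn _ (mem_Ici.2 (le_max_right _ _)))

end Lattice

/-- **Integral test for series estimates — II.**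
If `|f x| ≤ g ‖x‖` with `g` admissible, then for every `γ > 0` and `a ∈ ℤ^d` the series
`∑_{z∈ℤ^d} γ^d f(γ z + a)` is absolutely convergent; moreover there is a constant `M g`,
depending only on `g` (and `d`), additive and positively homogeneous in `g`, such that for
`γ ∈ (0,1)` one has `∑_{z∈ℤ^d} |γ^d f(γ z + a)| ≤ M g`. -/
theorem integral_test_series_estimate_II (d : ℕ) (hd : 0 < d) :
    (∀ (f : EuclideanSpace ℝ (Fin d) → ℝ) (g : ℝ → ℝ), AdmissibleDom d g →
      (∀ x, |f x| ≤ g ‖x‖) →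
      ∀ γ : ℝ, 0 < γ → ∀ a : Fin d → ℤ,
        Summable (fun z : Fin d → ℤ => |γ ^ d * f (γ • latt d z + latt d a)|)) ∧
    ∃ M : (ℝ → ℝ) → ℝ,
      (∀ g₁ g₂ : ℝ → ℝ, AdmissibleDom d g₁ → AdmissibleDom d g₂ →
        M (g₁ + g₂) = M g₁ + M g₂) ∧
      (∀ c : ℝ, 0 ≤ c → ∀ g : ℝ → ℝ, AdmissibleDom d g →
        M (fun r => c * g r) = c * M g) ∧
      (∀ (f : EuclideanSpace ℝ (Fin d) → ℝ) (g : ℝ → ℝ), AdmissibleDom d g →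
        (∀ x, |f x| ≤ g ‖x‖) →
        ∀ γ : ℝ, 0 < γ → γ < 1 → ∀ a : Fin d → ℤ,
          ∑' z : Fin d → ℤ, |γ ^ d * f (γ • latt d z + latt d a)| ≤ M g) := by
  have : NeZero d := ⟨hd.ne'⟩
  have hint {g : ℝ → ℝ} (hg : AdmissibleDom d g) {R : ℝ} (hR : 0 ≤ R) :
      Integrable fun x : EuclideanSpace ℝ (Fin d) => g (max (‖x‖ - R) 0) :=
    integrable_comp_max_norm_sub volume (by rwa [finrank_euclideanSpace_fin]) hR
  have hsum {f : EuclideanSpace ℝ (Fin d) → ℝ} {g : ℝ → ℝ} (hg : AdmissibleDom d g)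
      (hf : ∀ x, |f x| ≤ g ‖x‖) {γ : ℝ} (hγ : 0 < γ) (a : Fin d → ℤ) :=
    sum_abs_lattice_le_integral hg.1 hg.2.1 hf hγ (latt d a) (hint hg (by positivity))
  refine ⟨fun f g hg hf γ hγ a => summable_of_sum_le (fun _ => abs_nonneg _) (hsum hg hf hγ a),
    fun g => ∫ x : EuclideanSpace ℝ (Fin d), g (max (‖x‖ - √d) 0), ?_, ?_, ?_⟩
  · intro g₁ g₂ hg₁ hg₂
    exact integral_add (hint hg₁ (Real.sqrt_nonneg _)) (hint hg₂ (Real.sqrt_nonneg _))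
  · intro c _ g _
    exact integral_const_mul c _
  · intro f g hg hf γ hγ hγ1 a
    refine (Real.tsum_le_of_sum_le (fun _ => abs_nonneg _) (hsum hg hf hγ a)).trans ?_
    exact integral_comp_max_norm_sub_mono volume (by rwa [finrank_euclideanSpace_fin])
      (by positivity) (mul_le_of_le_one_right (Real.sqrt_nonneg _) hγ1.le)

end
end

section
/- Let X be a compact topological space and (f_n)_{n∈ℕ} a sequence of lower semicontinuous real-valued functionals on X converging pointwise to a functional f on X. Assume that for every η > 0 there exists N ∈ ℕ such that f_m ≥ f_n − η pointwise for all natural numbers m ≥ n ≥ N. Then lim_{n→∞} inf_{x∈X} f_n(x) = inf_{x∈X} f(x), and this common value is finite (> −∞). -/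
/-!
Letting `m → ∞` in the almost-monotonicity hypothesis gives `F n - η ≤ f` for large `n`,
which bounds `inf F n` from above by `inf f + η`. For the lower bound, if `c < inf f` then
every point lies in one of the open sets `{F k > c}` with `k ≥ N`; by compactness finitely
many of them cover `X`, and almost monotonicity propagates the bound `F k > c` to every
later index up to a loss of `η`.
-/

open Filter Topology

def AsymptoticallyMonotone {X : Type*} (F : ℕ → X → ℝ) : Prop :=
  ∀ η : ℝ, 0 < η → ∃ N : ℕ, ∀ m n : ℕ, N ≤ n → n ≤ m → ∀ x, F n x - η ≤ F m x

theorem LowerSemicontinuous.bddBelow_range {X : Type*} [TopologicalSpace X] [CompactSpace X]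
    {g : X → ℝ} (hg : LowerSemicontinuous g) : BddBelow (Set.range g) := by
  simpa only [Set.image_univ] using
    hg.lowerSemicontinuousOn Set.univ |>.bddBelow_of_isCompact isCompact_univ

theorem LowerSemicontinuous.exists_forall_exists_lt_of_tendsto {X : Type*}
    [TopologicalSpace X] [CompactSpace X] {F : ℕ → X → ℝ} {f : X → ℝ} {c : ℝ}
    (hlsc : ∀ n, LowerSemicontinuous (F n))
    (hpt : ∀ x, Tendsto (fun n => F n x) atTop (𝓝 (f x))) (hc : ∀ x, c < f x) (N : ℕ) :
    ∃ M, ∀ x, ∃ k, N ≤ k ∧ k ≤ M ∧ c < F k x := by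
  have hcover : (Set.univ : Set X) ⊆ ⋃ k : ℕ, F (N + k) ⁻¹' Set.Ioi c := by
    intro x _
    obtain ⟨m, hm, hNm⟩ :=
      (((hpt x).eventually (eventually_gt_nhds (hc x))).and (eventually_ge_atTop N)).exists
    exact Set.mem_iUnion.2 ⟨m - N, by rwa [Nat.add_sub_cancel' hNm]⟩
  obtain ⟨t, ht⟩ := isCompact_univ.elim_finite_subcover _
    (fun k => (hlsc (N + k)).isOpen_preimage c) hcover
  refine ⟨N + t.sup id, fun x => ?_⟩
  obtain ⟨k, hk, hxk⟩ := Set.mem_iUnion₂.1 (ht (Set.mem_univ x))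
  exact ⟨N + k, N.le_add_right k, Nat.add_le_add_left (Finset.le_sup (f := id) hk) N, hxk⟩

namespace AsymptoticallyMonotone

variable {X : Type*} {F : ℕ → X → ℝ} {f : X → ℝ}

theorem exists_forall_sub_le_of_tendsto (hF : AsymptoticallyMonotone F)
    (hpt : ∀ x, Tendsto (fun n => F n x) atTop (𝓝 (f x))) {η : ℝ} (hη : 0 < η) :
    ∃ N, ∀ n, N ≤ n → ∀ x, F n x - η ≤ f x := by
  obtain ⟨N, hN⟩ := hF η hη
  exact ⟨N, fun n hn x =>
    ge_of_tendsto (hpt x) ((eventually_ge_atTop n).mono fun m hm => hN m n hn hm x)⟩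

theorem bddBelow_range_of_tendsto (hF : AsymptoticallyMonotone F)
    (hpt : ∀ x, Tendsto (fun n => F n x) atTop (𝓝 (f x)))
    (hbdd : ∀ n, BddBelow (Set.range (F n))) : BddBelow (Set.range f) := by
  obtain ⟨N, hN⟩ := hF.exists_forall_sub_le_of_tendsto hpt one_pos
  obtain ⟨b, hb⟩ := hbdd N
  refine ⟨b - 1, ?_⟩
  rintro _ ⟨x, rfl⟩
  linarith [hN N le_rfl x, hb (Set.mem_range_self x)]

theorem eventually_iInf_lt_of_tendsto [Nonempty X] (hF : AsymptoticallyMonotone F)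
    (hpt : ∀ x, Tendsto (fun n => F n x) atTop (𝓝 (f x)))
    (hbdd : ∀ n, BddBelow (Set.range (F n))) {a : ℝ} (ha : ⨅ x, f x < a) :
    ∀ᶠ n in atTop, ⨅ x, F n x < a := by
  obtain ⟨N, hN⟩ := hF.exists_forall_sub_le_of_tendsto hpt (half_pos (sub_pos.2 ha))
  filter_upwards [eventually_ge_atTop N] with n hn
  have : (⨅ x, F n x) - (a - ⨅ x, f x) / 2 ≤ ⨅ x, f x :=
    le_ciInf fun x => (sub_le_sub_right (ciInf_le (hbdd n) x) _).trans (hN n hn x)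
  linarith

theorem eventually_lt_iInf_of_tendsto [TopologicalSpace X] [CompactSpace X] [Nonempty X]
    (hF : AsymptoticallyMonotone F) (hlsc : ∀ n, LowerSemicontinuous (F n))
    (hpt : ∀ x, Tendsto (fun n => F n x) atTop (𝓝 (f x)))
    (hbdd : BddBelow (Set.range f)) {a : ℝ} (ha : a < ⨅ x, f x) :
    ∀ᶠ m in atTop, a < ⨅ x, F m x := by
  set η := ((⨅ x, f x) - a) / 3 with hη_def
  have hη : 0 < η := by positivity
  obtain ⟨N, hN⟩ := hF η hη
  have hc : ∀ x, (⨅ x, f x) - η < f x := fun x => by linarith [ciInf_le hbdd x]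
  obtain ⟨M, hM⟩ := LowerSemicontinuous.exists_forall_exists_lt_of_tendsto hlsc hpt hc N
  filter_upwards [eventually_ge_atTop M] with m hm
  have : a + η ≤ ⨅ x, F m x := le_ciInf fun x => by
    obtain ⟨k, hNk, hkM, hk⟩ := hM x
    linarith [hN m k hNk (hkM.trans hm) x, hη_def]
  linarith

end AsymptoticallyMonotone

/-- **Limiting variational problem for increasing functionals (Dini-type lemma).**
Let `(F n)` be lower semicontinuous functionals on a compact space `X`, converging
pointwise to `f`, and such that for every η > 0 there is `N` with `F m ≥ F n − η`
for all `m ≥ n ≥ N`.  Then `inf F n (X) → inf f (X)`, and the limit is finite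
(`f` is bounded below). -/
theorem limiting_variational_problem
    {X : Type*} [TopologicalSpace X] [CompactSpace X] [Nonempty X]
    (F : ℕ → X → ℝ) (f : X → ℝ)
    (hlsc : ∀ n, LowerSemicontinuous (F n))
    (hpt : ∀ x, Tendsto (fun n => F n x) atTop (𝓝 (f x)))
    (hmono : ∀ η : ℝ, 0 < η → ∃ N : ℕ, ∀ m n : ℕ, N ≤ n → n ≤ m →
      ∀ x, F n x - η ≤ F m x) :
    Tendsto (fun n => ⨅ x, F n x) atTop (𝓝 (⨅ x, f x)) ∧ BddBelow (Set.range f) := by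
  have hF : AsymptoticallyMonotone F := hmono
  have hbddF : ∀ n, BddBelow (Set.range (F n)) := fun n => (hlsc n).bddBelow_range
  have hbdd : BddBelow (Set.range f) := hF.bddBelow_range_of_tendsto hpt hbddF
  exact ⟨tendsto_order.2 ⟨fun a ha => hF.eventually_lt_iInf_of_tendsto hlsc hpt hbdd ha,
    fun a ha => hF.eventually_iInf_lt_of_tendsto hpt hbddF ha⟩, hbdd⟩
end

section
/- Let X be a compact topological space, f a real-valued function on X, and (f_n) a sequence of lower semicontinuous functions on X converging pointwise to f and satisfying the almost-monotonicity condition: for every η > 0 there is N with f_m ≥ f_n − η for all m ≥ n ≥ N. Then for every η > 0 there exists q ∈ ℕ such that inf_{x∈X} f_n(x) ≥ inf_{x∈X} f(x) − η for all n ≥ q. -/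
open Filter Topology

/-! The superlevel sets `{F n > inf f - η/2}` are open by lower semicontinuity, and by pointwise
convergence every point lies in one of them with `n` beyond the almost-monotonicity threshold `N`
for `η/2`. Compactness leaves finitely many indices, and past the largest of them
almost-monotonicity costs at most another `η/2`. -/

theorem CompactSpace.exists_finset_forall_exists_lt_of_lowerSemicontinuous
    {X ι : Type*} [TopologicalSpace X] [CompactSpace X] {F : ι → X → ℝ}
    (hF : ∀ i, LowerSemicontinuous (F i)) {c : ℝ} (hcover : ∀ x, ∃ i, c < F i x) :
    ∃ s : Finset ι, ∀ x, ∃ i ∈ s, c < F i x := by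
  obtain ⟨s, hs⟩ := isCompact_univ.elim_finite_subcover (fun i => F i ⁻¹' Set.Ioi c)
    (fun i => lowerSemicontinuous_iff_isOpen_preimage.1 (hF i) c)
    (fun x _ => Set.mem_iUnion.2 (hcover x))
  exact ⟨s, fun x => by simpa using hs (Set.mem_univ x)⟩

/-- **Compactness step of the Dini-type lemma.**
Let `(F n)` be lower semicontinuous functions on a compact space `X` converging
pointwise to `f`, almost monotone in the sense that for every η > 0 there is `N`
with `F m ≥ F n − η` for all `m ≥ n ≥ N`.  Then for every η > 0 there is `q`
such that `inf F n (X) ≥ inf f (X) − η` for all `n ≥ q`. -/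
theorem dini_compactness_step
    {X : Type*} [TopologicalSpace X] [CompactSpace X] [Nonempty X]
    (F : ℕ → X → ℝ) (f : X → ℝ)
    (hlsc : ∀ n, LowerSemicontinuous (F n))
    (hpt : ∀ x, Tendsto (fun n => F n x) atTop (𝓝 (f x)))
    (hmono : ∀ η : ℝ, 0 < η → ∃ N : ℕ, ∀ m n : ℕ, N ≤ n → n ≤ m →
      ∀ x, F n x - η ≤ F m x) :
    ∀ η : ℝ, 0 < η → ∃ q : ℕ, ∀ n : ℕ, q ≤ n →
      (⨅ x, f x) - η ≤ ⨅ x, F n x := by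
  have hf_bdd : BddBelow (Set.range f) := by
    obtain ⟨N, hN⟩ := hmono 1 one_pos
    obtain ⟨b, hb⟩ := (hlsc N).bddBelow_range
    refine ⟨b - 1, Set.forall_mem_range.2 fun x => ?_⟩
    have hfx : F N x - 1 ≤ f x :=
      ge_of_tendsto (hpt x) (eventually_atTop.2 ⟨N, fun m hm => hN m N le_rfl hm x⟩)
    linarith [hb ⟨x, rfl⟩]
  intro η hη
  obtain ⟨N, hN⟩ := hmono (η / 2) (half_pos hη)
  have hcover : ∀ x, ∃ k, (⨅ y, f y) - η / 2 < F (N + k) x := by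
    intro x
    have hlim : (⨅ y, f y) - η / 2 < f x := by linarith [ciInf_le hf_bdd x]
    obtain ⟨a, ha⟩ := eventually_atTop.1 ((hpt x).eventually (lt_mem_nhds hlim))
    exact ⟨a, ha (N + a) (Nat.le_add_left _ _)⟩
  obtain ⟨s, hs⟩ := CompactSpace.exists_finset_forall_exists_lt_of_lowerSemicontinuous
    (fun k => hlsc (N + k)) hcover
  refine ⟨N + s.sup id, fun m hm => le_ciInf fun x => ?_⟩
  obtain ⟨k, hk, hkx⟩ := hs x
  have hk_le : k ≤ s.sup id := Finset.le_sup (f := id) hk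
  linarith [hN m (N + k) (Nat.le_add_right _ _) (by omega) x]
end
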